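/- For 1 ≤ k ≤ n, the derivative of the Veronese map ν at e_0 in direction e_k equals sqrt(d)·u_k, where u_k ∈ EuclideanSpace ℝ A(n,d) is the standard basis vector indexed by the exponent α with α_0 = d−1, α_k = 1 and all other entries 0; moreover the derivative of ν at e_0 in direction e_0 equals d·ν(e_0). In particular the vectors (1/sqrt(d))·Dν(e_0)(e_1), …, (1/sqrt(d))·Dν(e_0)(e_n) form an orthonormal family orthogonal to ν(e_0) (an orthonormal basis of the tangent space of the spherical Veronese variety at x_0^d). -/

import Mathlib

open scoped RealInnerProductSpace BigOperators

noncomputable section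

/-- The set of exponent vectors `α : Fin (n+1) → ℕ` with `|α| = d`. -/
abbrev Exps (n d : ℕ) : Type := {α : Fin (n + 1) → ℕ // ∑ i, α i = d}

instance (n d : ℕ) : Fintype (Exps n d) :=
  Fintype.subtype (Finset.Nat.antidiagonalTuple (n + 1) d) fun _ =>
    Finset.Nat.mem_antidiagonalTuple

/-- The Veronese map in Bombieri–Weyl coordinates. -/
def veronese (n d : ℕ) (ℓ : EuclideanSpace ℝ (Fin (n + 1))) :
    EuclideanSpace ℝ (Exps n d) := WithLp.toLp 2 fun (α : Exps n d) =>
  Real.sqrt ((d.factorial : ℝ) / ∏ i, ((α.1 i).factorial : ℝ)) * ∏ i, ℓ i ^ α.1 i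

/-- The exponent with `d - 1` in position `0`, `1` in position `k` (`1 ≤ k ≤ n`),
and `0` elsewhere. -/
def expTang (n d : ℕ) (hd : 0 < d) (k : Fin n) : Exps n d :=
  ⟨Pi.single (0 : Fin (n + 1)) (d - 1) + Pi.single k.succ 1, by
    simp [Finset.sum_add_distrib, Nat.sub_add_cancel hd]⟩

/-!
The coordinates of `ν` are the monomials `ℓ ↦ ℓ^α` weighted by `√(d!/α!)`. At `e₀` the partial
derivative of `ℓ^α` in a direction `e_k`, `k ≠ 0`, survives only for the exponent
`(d-1)e₀ + e_k`, whose weight is `√d`, so `Dν(e₀)(e_k)` is `√d` times a standard basis vector,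
distinct ones for distinct `k` and different from the support `d e₀` of `ν(e₀)`. The radial
derivative is Euler's identity `Dν(ℓ)ℓ = d ν(ℓ)` for the `d`-homogeneous map `ν`.
-/

section

variable {𝕜 ι : Type*} [RCLike 𝕜]

theorem fderiv_euclidean_apply [Fintype ι] {H : Type*} [NormedAddCommGroup H] [NormedSpace 𝕜 H]
    {f : H → EuclideanSpace 𝕜 ι} {y : H} (hf : DifferentiableAt 𝕜 f y) (v : H) (i : ι) :
    fderiv 𝕜 f y v i = fderiv 𝕜 (fun x => f x i) y v := by
  have h : HasFDerivAt (fun x => f x i) (EuclideanSpace.proj i ∘L fderiv 𝕜 f y) y :=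
    (EuclideanSpace.proj (𝕜 := 𝕜) i).hasFDerivAt.comp y hf.hasFDerivAt
  rw [h.fderiv]
  rfl

theorem fderiv_apply_self_of_homogeneous {E F : Type*} [NormedAddCommGroup E]
    [NormedSpace 𝕜 E] [NormedAddCommGroup F] [NormedSpace 𝕜 F] {f : E → F} {x : E} {d : ℕ}
    (hf : DifferentiableAt 𝕜 f x) (hhom : ∀ t : 𝕜, f (t • x) = t ^ d • f x) :
    fderiv 𝕜 f x x = (d : 𝕜) • f x := by
  have hline : HasDerivAt (fun t : 𝕜 => f (t • x)) (fderiv 𝕜 f x x) 1 := by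
    have := hf.hasFDerivAt.comp_hasDerivAt_of_eq 1 ((hasDerivAt_id (1 : 𝕜)).smul_const x)
      (one_smul 𝕜 x).symm
    rwa [one_smul] at this
  have hpow : HasDerivAt (fun t : 𝕜 => t ^ d • f x) ((d : 𝕜) • f x) 1 := by
    simpa using (hasDerivAt_pow d (1 : 𝕜)).smul_const (f x)
  exact hline.unique (by simpa only [hhom] using hpow)

variable [Fintype ι] [DecidableEq ι]

theorem fderiv_monomial_apply_single (α : ι → ℕ) (x : EuclideanSpace 𝕜 ι) (m : ι) :
    fderiv 𝕜 (fun ℓ : EuclideanSpace 𝕜 ι => ∏ i, ℓ i ^ α i) x (EuclideanSpace.single m 1) =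
      (∏ j ∈ Finset.univ.erase m, x j ^ α j) * (α m * x m ^ (α m - 1)) := by
  rw [(HasFDerivAt.finsetProd fun i _ => (PiLp.hasFDerivAt_apply 2 x i).pow (α i)).fderiv]
  simp [PiLp.single_apply]

theorem prod_single_one_pow (s : Finset ι) (i : ι) (α : ι → ℕ) :
    ∏ j ∈ s, (EuclideanSpace.single i (1 : 𝕜)) j ^ α j =
      if ∀ j ∈ s, j ≠ i → α j = 0 then 1 else 0 := by
  have h (j : ι) : (EuclideanSpace.single i (1 : 𝕜)) j ^ α j =
      if j ≠ i → α j = 0 then 1 else 0 := by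
    by_cases hj : j = i <;> simp [PiLp.single_apply, hj, zero_pow_eq]
  simp only [h]
  convert Finset.prod_boole

end

theorem natCast_mul_zero_pow_sub_one {R : Type*} [Semiring R] (a : ℕ) :
    (a : R) * 0 ^ (a - 1) = if a = 1 then 1 else 0 := by
  rcases a with _ | _ | a <;> simp

def bombieriWeylCoeff (d : ℕ) {ι : Type*} [Fintype ι] (α : ι → ℕ) : ℝ :=
  Real.sqrt ((d.factorial : ℝ) / ∏ i, ((α i).factorial : ℝ))

section

open Finset

variable {n d : ℕ}

theorem veronese_apply (ℓ : EuclideanSpace ℝ (Fin (n + 1))) (α : Exps n d) :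
    veronese n d ℓ α = bombieriWeylCoeff d α.1 * ∏ i, ℓ i ^ α.1 i :=
  rfl

theorem veronese_smul (t : ℝ) (ℓ : EuclideanSpace ℝ (Fin (n + 1))) :
    veronese n d (t • ℓ) = t ^ d • veronese n d ℓ := by
  ext α
  simp only [veronese_apply, PiLp.smul_apply, smul_eq_mul, mul_pow, prod_mul_distrib,
    prod_pow_eq_pow_sum, α.2]
  ring

theorem differentiable_veronese : Differentiable ℝ (veronese n d) := by
  rw [differentiable_euclidean]
  intro α
  simp only [veronese_apply]
  fun_prop

theorem fderiv_veronese_apply_single (x : EuclideanSpace ℝ (Fin (n + 1))) (m : Fin (n + 1))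
    (α : Exps n d) :
    fderiv ℝ (veronese n d) x (EuclideanSpace.single m 1) α =
      bombieriWeylCoeff d α.1 *
        ((∏ j ∈ univ.erase m, x j ^ α.1 j) * (α.1 m * x m ^ (α.1 m - 1))) := by
  rw [fderiv_euclidean_apply differentiable_veronese.differentiableAt,
    ← fderiv_monomial_apply_single]
  simp only [veronese_apply]
  rw [fderiv_const_mul (by fun_prop)]
  rfl

theorem eq_expTang_iff (hd : 0 < d) (k : Fin n) (α : Exps n d) :
    α = expTang n d hd k ↔ α.1 k.succ = 1 ∧ ∀ j ∈ univ.erase k.succ, j ≠ 0 → α.1 j = 0 := by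
  constructor
  · rintro rfl
    simp +contextual [expTang]
  · rintro ⟨hk, hrest⟩
    have hzero : α.1 0 + 1 = d := by
      have hsum := α.2
      rwa [sum_eq_add_of_mem 0 k.succ (mem_univ _) (mem_univ _) (Fin.succ_ne_zero k).symm
        fun j _ hj => hrest j (mem_erase.2 ⟨hj.2, mem_univ j⟩) hj.1, hk] at hsum
    refine Subtype.ext (funext fun j => ?_)
    by_cases hj0 : j = 0
    · subst hj0
      simp [expTang, (Fin.succ_ne_zero k).symm, Nat.eq_sub_of_add_eq hzero]
    · by_cases hjk : j = k.succ
      · subst hjk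
        simp [expTang, hk, Fin.succ_ne_zero k]
      · simp [expTang, hj0, hjk, hrest j (mem_erase.2 ⟨hjk, mem_univ j⟩) hj0]

theorem expTang_injective (hd : 0 < d) : Function.Injective (expTang n d hd) := by
  intro k k' h
  simpa [expTang, Pi.single_apply, Fin.succ_ne_zero] using ((eq_expTang_iff hd k _).1 h.symm).1

theorem bombieriWeylCoeff_expTang (hd : 0 < d) (k : Fin n) :
    bombieriWeylCoeff d (expTang n d hd k).1 = Real.sqrt d := by
  have hprod : ∏ i, (((expTang n d hd k).1 i).factorial : ℝ) = ((d - 1).factorial : ℝ) := by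
    rw [prod_eq_single 0 (fun j _ hj => ?_) (by simp)]
    · simp [expTang, (Fin.succ_ne_zero k).symm]
    · by_cases hjk : j = k.succ <;> simp [expTang, hj, hjk]
  rw [bombieriWeylCoeff, hprod, ← Nat.mul_factorial_pred hd.ne', Nat.cast_mul,
    mul_div_cancel_right₀ _ (by positivity)]

theorem fderiv_veronese_single_zero_apply_single_succ (hd : 0 < d) (k : Fin n) :
    fderiv ℝ (veronese n d) (EuclideanSpace.single 0 1) (EuclideanSpace.single k.succ 1) =
      Real.sqrt d • EuclideanSpace.single (expTang n d hd k) (1 : ℝ) := by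
  ext α
  rw [fderiv_veronese_apply_single, prod_single_one_pow, PiLp.single_apply,
    if_neg (Fin.succ_ne_zero k), natCast_mul_zero_pow_sub_one]
  by_cases hα : α = expTang n d hd k
  · subst hα
    obtain ⟨hk, hrest⟩ := (eq_expTang_iff hd k _).1 rfl
    rw [if_pos hrest, if_pos hk, bombieriWeylCoeff_expTang]
    simp
  · have hα' := mt (eq_expTang_iff hd k α).2 hα
    by_cases hk : α.1 k.succ = 1 <;> simp_all

theorem veronese_single_zero_apply_expTang (hd : 0 < d) (k : Fin n) :
    veronese n d (EuclideanSpace.single 0 1) (expTang n d hd k) = 0 := by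
  have hk := ((eq_expTang_iff hd k _).1 rfl).1
  rw [veronese_apply, prod_single_one_pow, if_neg fun h => by
    simp [h k.succ (mem_univ _) (Fin.succ_ne_zero k)] at hk, mul_zero]

end

theorem fderiv_veronese_at_e0_general (n d : ℕ) (hd : 0 < d) :
    (∀ k : Fin n,
      fderiv ℝ (veronese n d) (EuclideanSpace.single 0 1)
          (EuclideanSpace.single k.succ 1) =
        Real.sqrt d • EuclideanSpace.single (expTang n d hd k) (1 : ℝ)) ∧
    fderiv ℝ (veronese n d) (EuclideanSpace.single 0 1)
        (EuclideanSpace.single 0 1) =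
      (d : ℝ) • veronese n d (EuclideanSpace.single 0 1) ∧
    Orthonormal ℝ (fun k : Fin n =>
      (1 / Real.sqrt d) •
        fderiv ℝ (veronese n d) (EuclideanSpace.single 0 1)
          (EuclideanSpace.single k.succ 1)) ∧
    (∀ k : Fin n,
      ⟪fderiv ℝ (veronese n d) (EuclideanSpace.single 0 1)
          (EuclideanSpace.single k.succ 1),
        veronese n d (EuclideanSpace.single 0 1)⟫ = 0) := by
  have htang := fderiv_veronese_single_zero_apply_single_succ (n := n) hd
  refine ⟨htang, fderiv_apply_self_of_homogeneous differentiable_veronese.differentiableAt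
    fun t => veronese_smul t _, ?_, fun k => ?_⟩
  · have hsqrt : Real.sqrt d ≠ 0 := by positivity
    have hunit (k : Fin n) : (1 / Real.sqrt d) • fderiv ℝ (veronese n d)
        (EuclideanSpace.single 0 1) (EuclideanSpace.single k.succ 1) =
        EuclideanSpace.single (expTang n d hd k) (1 : ℝ) := by
      rw [htang, smul_smul, one_div, inv_mul_cancel₀ hsqrt, one_smul]
    rw [funext hunit]
    exact EuclideanSpace.orthonormal_single.comp _ (expTang_injective hd)
  · rw [htang, real_inner_smul_left, EuclideanSpace.inner_single_left,
      veronese_single_zero_apply_expTang, mul_zero, mul_zero]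

/-- at `e₀`, the derivative of the Veronese map `ν` in direction
`e_k` (`1 ≤ k ≤ n`) is `√d · u_k` where `u_k` is the standard basis vector indexed by
the exponent `(d-1, 0, …, 1, …, 0)`; in direction `e₀` it is `d · ν(e₀)`; and the
vectors `(1/√d)·Dν(e₀)(e_k)` form an orthonormal family orthogonal to `ν(e₀)`. -/
theorem fderiv_veronese_at_e0 (n d : ℕ) (hn : 0 < n) (hd : 0 < d) :
    (∀ k : Fin n,
      fderiv ℝ (veronese n d) (EuclideanSpace.single 0 1)
          (EuclideanSpace.single k.succ 1) =
        Real.sqrt d • EuclideanSpace.single (expTang n d hd k) (1 : ℝ)) ∧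
    fderiv ℝ (veronese n d) (EuclideanSpace.single 0 1)
        (EuclideanSpace.single 0 1) =
      (d : ℝ) • veronese n d (EuclideanSpace.single 0 1) ∧
    Orthonormal ℝ (fun k : Fin n =>
      (1 / Real.sqrt d) •
        fderiv ℝ (veronese n d) (EuclideanSpace.single 0 1)
          (EuclideanSpace.single k.succ 1)) ∧
    (∀ k : Fin n,
      ⟪fderiv ℝ (veronese n d) (EuclideanSpace.single 0 1)
          (EuclideanSpace.single k.succ 1),
        veronese n d (EuclideanSpace.single 0 1)⟫ = 0) :=
  fderiv_veronese_at_e0_general n d hd
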